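/- Let n, k ∈ ℕ with n and k not both zero, and let x₁, x₂ ∈ 𝕊¹. Then ∫_{𝕊¹} cos(n · arccos(ωᵀx₁)) · cos(k · arccos(ωᵀx₂)) dU(ω) = (δ_{n,k}/2) · cos(n · arccos(x₁ᵀx₂)), where δ_{n,k} is the Kronecker delta. -/

import Mathlib

open MeasureTheory Real

noncomputable section

/-- The Gegenbauer polynomials `G_n^λ`. -/
def Gegen (lam : ℝ) : ℕ → ℝ → ℝ
  | 0, _ => 1
  | 1, r => 2 * lam * r
  | n + 2, r =>
      2 * ((n : ℝ) + 2 + lam - 1) / ((n : ℝ) + 2) * r * Gegen lam (n + 1) r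
        - ((n : ℝ) + 2 + 2 * lam - 2) / ((n : ℝ) + 2) * Gegen lam n r

/-- The unit sphere `𝕊^d ⊆ ℝ^{d+1}`. -/
abbrev Sph (d : ℕ) := Metric.sphere (0 : EuclideanSpace ℝ (Fin (d + 1))) 1

/-- Euclidean dot product of two points of the sphere. -/
def dotS {d : ℕ} (u v : Sph d) : ℝ :=
  inner ℝ (u : EuclideanSpace ℝ (Fin (d + 1))) (v : EuclideanSpace ℝ (Fin (d + 1)))

/-- The uniform (normalized surface) probability measure on `𝕊^d`. -/
def sphereUniform (d : ℕ) : Measure (Sph d) :=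
  ((volume : Measure (EuclideanSpace ℝ (Fin (d + 1)))).toSphere Set.univ)⁻¹ •
    (volume : Measure (EuclideanSpace ℝ (Fin (d + 1)))).toSphere

/-! ### Auxiliary material -/

/-- Shorthand for the plane. -/
abbrev E2' := EuclideanSpace ℝ (Fin 2)

/-- Build a point of the plane from coordinates. -/
def e2 (a b : ℝ) : E2' := (WithLp.equiv 2 (Fin 2 → ℝ)).symm ![a, b]

lemma e2_norm (a b : ℝ) : ‖e2 a b‖ = Real.sqrt (a^2 + b^2) := by
  rw [EuclideanSpace.norm_eq]
  simp [e2, Fin.sum_univ_two, sq_abs]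

/-- The standard parametrization of the circle. -/
def cS (θ : ℝ) : Sph 1 := ⟨e2 (Real.cos θ) (Real.sin θ), by
  simp [mem_sphere_iff_norm, e2_norm, Real.sin_sq_add_cos_sq, Real.cos_sq_add_sin_sq]⟩

lemma cS_surj (x : Sph 1) : ∃ θ, cS θ = x := by
  obtain ⟨v, hv⟩ := x
  have hn : ‖v‖ = 1 := by simpa using hv
  have hsum : (v 0)^2 + (v 1)^2 = 1 := by
    have := EuclideanSpace.norm_eq v
    rw [hn] at this
    have h2 : Real.sqrt (∑ i : Fin 2, ‖v i‖ ^ 2) = 1 := this.symm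
    have := Real.sqrt_eq_one.mp h2
    simpa [Fin.sum_univ_two, sq_abs] using this
  have h0 : |v 0| ≤ 1 := by nlinarith [sq_nonneg (v 1), abs_nonneg (v 0), sq_abs (v 0)]
  have h0l : -1 ≤ v 0 := by cases abs_le.mp h0; assumption
  have h0r : v 0 ≤ 1 := (abs_le.mp h0).2
  have hs : Real.sqrt (1 - (v 0)^2) = |v 1| := by
    rw [show 1 - (v 0)^2 = (v 1)^2 by linarith, Real.sqrt_sq_eq_abs]
  rcases le_or_gt 0 (v 1) with hb | hb
  · refine ⟨Real.arccos (v 0), ?_⟩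
    ext i
    fin_cases i <;>
      simp [cS, e2, Real.cos_arccos h0l h0r, Real.sin_arccos, hs, abs_of_nonneg hb]
  · refine ⟨-Real.arccos (v 0), ?_⟩
    ext i
    fin_cases i <;>
      simp [cS, e2, Real.cos_arccos h0l h0r, Real.sin_arccos, hs, abs_of_neg hb]

lemma dotS_cS (θ φ : ℝ) : dotS (cS θ) (cS φ) = Real.cos (θ - φ) := by
  simp [dotS, cS, e2, PiLp.inner_apply, Fin.sum_univ_two, RCLike.inner_apply, Real.cos_sub]
  ring

lemma cos_nat_arccos_cos (n : ℕ) (t : ℝ) :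
    Real.cos ((n : ℝ) * Real.arccos (Real.cos t)) = Real.cos ((n : ℝ) * t) := by
  have h1 := Polynomial.Chebyshev.T_real_cos (Real.arccos (Real.cos t)) (n : ℤ)
  have h2 := Polynomial.Chebyshev.T_real_cos t (n : ℤ)
  rw [Real.cos_arccos (neg_one_le_cos t) (Real.cos_le_one t)] at h1
  push_cast at h1 h2
  rw [← h1, h2]

lemma integral_cos_int_mul_add (m : ℤ) (hm : m ≠ 0) (c : ℝ) :
    ∫ θ in (-π)..π, Real.cos ((m : ℝ) * θ + c) = 0 := by
  have hm' : (m : ℝ) ≠ 0 := Int.cast_ne_zero.mpr hm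
  rw [intervalIntegral.integral_comp_mul_add Real.cos hm' c]
  rw [integral_cos]
  have h1 : Real.sin ((m:ℝ) * π + c) = Real.cos ((m:ℝ)*π) * Real.sin c := by
    rw [Real.sin_add, Real.sin_int_mul_pi, zero_mul, zero_add]
  have h2 : Real.sin ((m:ℝ) * -π + c) = Real.cos ((m:ℝ)*π) * Real.sin c := by
    rw [Real.sin_add]
    rw [show (m:ℝ) * -π = ((-m : ℤ):ℝ) * π by push_cast; ring, Real.sin_int_mul_pi]
    push_cast
    rw [show -(m:ℝ) * π = -((m:ℝ)*π) by ring, Real.cos_neg]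
    ring
  rw [h1, h2]
  simp

open scoped Classical in
/-- Radial projection of the plane to the circle. -/
def projS (x : E2') : Sph 1 :=
  if hx : x = 0 then cS 0 else ⟨‖x‖⁻¹ • x, by
    rw [mem_sphere_zero_iff_norm, norm_smul, norm_inv, norm_norm,
      inv_mul_cancel₀ (norm_ne_zero_iff.2 hx)]⟩

abbrev hInd : ℝ → ℝ := Set.indicator (Set.Ioo (0:ℝ) 1) 1

lemma half_int : ∫ r in Set.Ioi (0:ℝ), r * hInd r = 1/2 := by
  have h1 : ∀ r : ℝ, r * hInd r = Set.indicator (Set.Ioo (0:ℝ) 1) id r := by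
    intro r
    by_cases hr : r ∈ Set.Ioo (0:ℝ) 1 <;> simp [hInd, Set.indicator_of_mem, hr]
  simp_rw [h1]
  rw [integral_indicator measurableSet_Ioo, Measure.restrict_restrict measurableSet_Ioo]
  rw [show Set.Ioo (0:ℝ) 1 ∩ Set.Ioi 0 = Set.Ioo 0 1 by
    rw [Set.inter_eq_left]; exact fun x hx => hx.1]
  rw [← integral_Ioc_eq_integral_Ioo, ← intervalIntegral.integral_of_le (by norm_num : (0:ℝ) ≤ 1)]
  simp [integral_id]

lemma step2 : ∫ r : Set.Ioi (0:ℝ), hInd r.1 ∂(Measure.volumeIoiPow 1) = 1/2 := by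
  rw [Measure.volumeIoiPow]
  simp only [ENNReal.ofReal]
  rw [integral_withDensity_eq_integral_smul
    (by exact (measurable_subtype_coe.pow_const _).real_toNNReal)]
  rw [integral_subtype_comap measurableSet_Ioi (fun a => Real.toNNReal (a ^ 1) • hInd a)]
  rw [← half_int]
  refine setIntegral_congr_fun measurableSet_Ioi fun r hr => ?_
  rw [NNReal.smul_def, Real.coe_toNNReal _ (pow_nonneg (le_of_lt hr) _)]
  simp

/-- The measurable equivalence between the plane and `ℝ × ℝ`. -/
def Tmeq : E2' ≃ᵐ ℝ × ℝ :=
  (MeasurableEquiv.toLp 2 (Fin 2 → ℝ)).symm.trans MeasurableEquiv.finTwoArrow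

lemma Tmeq_mp : MeasurePreserving Tmeq (volume : Measure E2') (volume : Measure (ℝ × ℝ)) :=
  (MeasureTheory.volume_preserving_finTwoArrow ℝ).comp
    (EuclideanSpace.volume_preserving_symm_measurableEquiv_toLp (Fin 2))

lemma Tmeq_symm (a b : ℝ) : Tmeq.symm (a, b) = e2 a b := by
  rfl

lemma projS_polar {r θ : ℝ} (hr : 0 < r) :
    projS (e2 (r * Real.cos θ) (r * Real.sin θ)) = cS θ := by
  have hnorm : ‖e2 (r * Real.cos θ) (r * Real.sin θ)‖ = r := by
    rw [e2_norm, show (r * Real.cos θ)^2 + (r * Real.sin θ)^2 = r^2 by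
      have := Real.sin_sq_add_cos_sq θ; nlinarith]
    exact Real.sqrt_sq hr.le
  have hne : e2 (r * Real.cos θ) (r * Real.sin θ) ≠ 0 := by
    intro h; rw [h, norm_zero] at hnorm; exact hr.ne hnorm
  rw [projS, dif_neg hne]
  apply Subtype.ext
  show ‖e2 (r * Real.cos θ) (r * Real.sin θ)‖⁻¹ • e2 (r * Real.cos θ) (r * Real.sin θ)
      = e2 (Real.cos θ) (Real.sin θ)
  rw [hnorm]
  ext i
  fin_cases i <;>
    simp [e2, PiLp.smul_apply, smul_eq_mul, inv_mul_cancel_left₀ hr.ne']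

lemma norm_e2_polar {r θ : ℝ} (hr : 0 ≤ r) : ‖e2 (r * Real.cos θ) (r * Real.sin θ)‖ = r := by
  rw [e2_norm, show (r * Real.cos θ)^2 + (r * Real.sin θ)^2 = r^2 by
    have := Real.sin_sq_add_cos_sq θ; nlinarith]
  exact Real.sqrt_sq hr

lemma toSphere_integral (f : Sph 1 → ℝ) :
    ∫ x, f x ∂((volume : Measure E2').toSphere)
      = ∫ θ in Set.Ioo (-π) π, f (cS θ) := by
  set μ := (volume : Measure E2')
  set g : E2' → ℝ := fun x => f (projS x) * hInd ‖x‖ with hg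
  have hdim : Module.finrank ℝ E2' = 2 := finrank_euclideanSpace_fin
  have keyA : ∫ p : Sph 1 × Set.Ioi (0:ℝ), f p.1 * hInd p.2.1
      ∂(μ.toSphere.prod (Measure.volumeIoiPow 1))
      = (∫ x, f x ∂μ.toSphere) * (1/2) := by
    rw [integral_prod_mul f (fun r : Set.Ioi (0:ℝ) => hInd r.1), step2]
  have mp : MeasurePreserving (homeomorphUnitSphereProd E2') (μ.comap Subtype.val)
      (μ.toSphere.prod (Measure.volumeIoiPow 1)) := by
    have := μ.measurePreserving_homeomorphUnitSphereProd
    rwa [hdim] at this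
  have keyB : ∫ x : ({0}ᶜ : Set E2'), g x.1 ∂(μ.comap Subtype.val)
      = ∫ p : Sph 1 × Set.Ioi (0:ℝ), f p.1 * hInd p.2.1
        ∂(μ.toSphere.prod (Measure.volumeIoiPow 1)) := by
    rw [← mp.integral_comp (Homeomorph.measurableEmbedding _)
      (fun p : Sph 1 × Set.Ioi (0:ℝ) => f p.1 * hInd p.2.1)]
    refine integral_congr_ae (Filter.Eventually.of_forall fun x => ?_)
    have hx : x.1 ≠ 0 := x.2
    simp only [hg]
    congr 1
    · congr 1
      rw [projS, dif_neg hx]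
      exact Subtype.ext (by simp)
    · simp
  have keyC : ∫ x : ({0}ᶜ : Set E2'), g x.1 ∂(μ.comap Subtype.val) = ∫ x, g x ∂μ := by
    rw [integral_subtype_comap (measurableSet_singleton (0:E2')).compl g,
      MeasureTheory.restrict_compl_singleton]
  have keyD : ∫ x, g x ∂μ = ∫ p : ℝ × ℝ, g (Tmeq.symm p) :=
    ((Tmeq_mp.symm Tmeq).integral_comp Tmeq.symm.measurableEmbedding g).symm
  have keyE : ∫ p : ℝ × ℝ, g (Tmeq.symm p)
      = ∫ p in Set.Ioi (0:ℝ) ×ˢ Set.Ioo (-π) π, (p.1 * hInd p.1) * f (cS p.2) := by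
    rw [← integral_comp_polarCoord_symm (fun p => g (Tmeq.symm p))]
    have htarget : polarCoord.target = Set.Ioi (0:ℝ) ×ˢ Set.Ioo (-π) π := rfl
    rw [htarget]
    refine setIntegral_congr_fun (measurableSet_Ioi.prod measurableSet_Ioo) fun p hp => ?_
    have hp1 : 0 < p.1 := hp.1
    have hsymm : polarCoord.symm p = (p.1 * Real.cos p.2, p.1 * Real.sin p.2) := rfl
    rw [hsymm, Tmeq_symm, hg]
    simp only [projS_polar hp1, norm_e2_polar hp1.le, smul_eq_mul]
    ring
  have keyF : ∫ p in Set.Ioi (0:ℝ) ×ˢ Set.Ioo (-π) π, (p.1 * hInd p.1) * f (cS p.2)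
      = (1/2) * ∫ θ in Set.Ioo (-π) π, f (cS θ) := by
    rw [show (volume : Measure (ℝ × ℝ)) = (volume : Measure ℝ).prod volume from
      Measure.volume_eq_prod ℝ ℝ]
    rw [setIntegral_prod_mul (fun r => r * hInd r) (fun θ => f (cS θ)), half_int]
  have : (∫ x, f x ∂μ.toSphere) * (1/2) = (1/2) * ∫ θ in Set.Ioo (-π) π, f (cS θ) := by
    rw [← keyA, ← keyB, keyC, keyD, keyE, keyF]
  linarith

lemma toSphere_univ_toReal :
    (((volume : Measure E2').toSphere) Set.univ).toReal = 2 * π := by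
  have h := toSphere_integral (fun _ => (1:ℝ))
  rw [integral_const, smul_eq_mul, mul_one] at h
  rw [← measureReal_def, h]
  rw [setIntegral_const, smul_eq_mul, mul_one, measureReal_def, Real.volume_Ioo]
  rw [ENNReal.toReal_ofReal (by linarith [Real.pi_pos])]
  ring

lemma sphereUniform_integral (f : Sph 1 → ℝ) :
    ∫ x, f x ∂(sphereUniform 1)
      = (2 * π)⁻¹ * ∫ θ in Set.Ioo (-π) π, f (cS θ) := by
  rw [sphereUniform, integral_smul_measure, ENNReal.toReal_inv, toSphere_univ_toReal,
    toSphere_integral f, smul_eq_mul]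

lemma key_integral (m₁ m₂ : ℤ) (c₁ c₂ : ℝ) (hm₂ : m₂ ≠ 0) :
    ∫ θ in Set.Ioo (-π) π,
        (Real.cos ((m₁:ℝ)*θ + c₁) + Real.cos ((m₂:ℝ)*θ + c₂))/2
      = if m₁ = 0 then π * Real.cos c₁ else 0 := by
  have hle : -π ≤ π := by linarith [Real.pi_pos]
  rw [← integral_Ioc_eq_integral_Ioo, ← intervalIntegral.integral_of_le hle]
  have i₁ : IntervalIntegrable (fun θ => Real.cos ((m₁:ℝ)*θ + c₁)) volume (-π) π :=
    (Real.continuous_cos.comp (by continuity)).intervalIntegrable _ _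
  have i₂ : IntervalIntegrable (fun θ => Real.cos ((m₂:ℝ)*θ + c₂)) volume (-π) π :=
    (Real.continuous_cos.comp (by continuity)).intervalIntegrable _ _
  rw [intervalIntegral.integral_div, intervalIntegral.integral_add i₁ i₂,
    integral_cos_int_mul_add m₂ hm₂]
  by_cases h : m₁ = 0
  · subst h
    rw [if_pos rfl]
    simp only [Int.cast_zero, zero_mul, zero_add, intervalIntegral.integral_const,
      smul_eq_mul, sub_neg_eq_add, add_zero]
    ring
  · rw [integral_cos_int_mul_add m₁ h, if_neg h]
    ring

/-- Duplication formula on the circle: the integral of a product of two cosine waves over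
the uniform measure on . -/
theorem circle_duplication
    (n k : ℕ) (hnk : ¬(n = 0 ∧ k = 0)) (x₁ x₂ : Sph 1) :
    ∫ w, Real.cos ((n : ℝ) * Real.arccos (dotS w x₁)) *
        Real.cos ((k : ℝ) * Real.arccos (dotS w x₂)) ∂(sphereUniform 1)
      = (if n = k then (1 : ℝ) else 0) / 2 *
          Real.cos ((n : ℝ) * Real.arccos (dotS x₁ x₂)) := by
  obtain ⟨α, hα⟩ := cS_surj x₁
  obtain ⟨β, hβ⟩ := cS_surj x₂
  subst hα hβ
  have hpt : ∀ x y : ℝ, Real.cos x * Real.cos y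
      = (Real.cos (x - y) + Real.cos (x + y))/2 := by
    intro x y
    rw [Real.cos_sub, Real.cos_add]
    ring
  have hint : ∀ θ : ℝ,
      Real.cos ((n:ℝ) * Real.arccos (dotS (cS θ) (cS α))) *
        Real.cos ((k:ℝ) * Real.arccos (dotS (cS θ) (cS β)))
      = (Real.cos ((((n:ℤ) - k : ℤ):ℝ)*θ + ((k:ℝ)*β - n*α))
         + Real.cos ((((n:ℤ) + k : ℤ):ℝ)*θ + (-(n:ℝ)*α - k*β)))/2 := by
    intro θ
    rw [dotS_cS, dotS_cS, cos_nat_arccos_cos, cos_nat_arccos_cos, hpt]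
    rw [show (n:ℝ)*(θ-α) - k*(θ-β) = (((n:ℤ) - k : ℤ):ℝ)*θ + ((k:ℝ)*β - n*α) by
      push_cast; ring]
    rw [show (n:ℝ)*(θ-α) + k*(θ-β) = (((n:ℤ) + k : ℤ):ℝ)*θ + (-(n:ℝ)*α - k*β) by
      push_cast; ring]
  rw [show (fun w => Real.cos ((n : ℝ) * Real.arccos (dotS w (cS α))) *
        Real.cos ((k : ℝ) * Real.arccos (dotS w (cS β))))
      = fun w => Real.cos ((n : ℝ) * Real.arccos (dotS w (cS α))) *
        Real.cos ((k : ℝ) * Real.arccos (dotS w (cS β))) from rfl]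
  rw [sphereUniform_integral (fun w => Real.cos ((n : ℝ) * Real.arccos (dotS w (cS α))) *
        Real.cos ((k : ℝ) * Real.arccos (dotS w (cS β))))]
  have hsum : (n:ℤ) + k ≠ 0 := by
    intro h
    have hn : n = 0 := by omega
    have hk : k = 0 := by omega
    exact hnk ⟨hn, hk⟩
  rw [setIntegral_congr_fun measurableSet_Ioo (fun θ _ => hint θ)]
  rw [key_integral _ _ _ _ hsum]
  rw [dotS_cS, cos_nat_arccos_cos]
  by_cases h : n = k
  · subst h
    rw [sub_self, if_pos rfl, if_pos rfl]
    have : (n:ℝ)*β - n*α = -((n:ℝ)*(α - β)) := by ring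
    rw [this, Real.cos_neg]
    field_simp
  · rw [if_neg (show (n:ℤ) - (k:ℤ) ≠ 0 by omega), if_neg h]
    ring
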